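/- Let f ∈ ℝ[y₁,…,y_n] be a homogeneous polynomial of degree d which is strictly positive on the simplex Δ_n = {y ∈ ℝⁿ : y_i ≥ 0 for all i, Σ_i y_i = 1}, and let f_* = min_{y∈Δ_n} f(y) > 0. Then for every integer N > d(d−1)·‖f‖/(2 f_*) − d, all coefficients of the polynomial (y₁ + ⋯ + y_n)^N · f(y₁,…,y_n) are positive. -/

import Mathlib

/-!
Fix a multi-index `β` of degree `S = d + N`. Comparing coefficients gives
`β! · [y^β] (∑ yᵢ)^N f = N! · ∑_α f_α ∏ᵢ βᵢ(βᵢ - 1)⋯(βᵢ - αᵢ + 1)`, i.e. `f` evaluated at `β` in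
the falling-factorial basis. Ordinary evaluation gives `f(β) = S^d f(β/S) ≥ S^d f_*`. Since
`|f_α| ≤ ‖f‖ · d!/α!` and `β^α` dominates its falling-factorial counterpart, the two
evaluations differ by at most `‖f‖` times the corresponding difference for `(∑ yᵢ)^d`, which is
`S^d - S(S - 1)⋯(S - d + 1) ≤ C(d, 2) S^(d-1)`. The bound on `N` says `C(d, 2) ‖f‖ < S f_*`.
-/

open MvPolynomial

/-- The weighted coefficient norm `‖f‖ = max_α |f_α| · α₁!⋯α_n!/(α₁+⋯+α_n)!`. -/
noncomputable def wnorm {n : ℕ} (f : MvPolynomial (Fin n) ℝ) : ℝ :=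
  ↑(f.support.sup fun α =>
      ‖coeff α f‖₊ * (∏ i, ((α i).factorial : NNReal)) /
        (((α.sum fun _ e => e).factorial : NNReal)))

open Finset

namespace Finsupp

variable {σ : Type*}

theorem sum_id_eq_degree (α : σ →₀ ℕ) : (α.sum fun _ m => m) = α.degree := rfl

variable [Fintype σ]

theorem prod_factorial_mul_multinomial (α : σ →₀ ℕ) :
    (∏ i, (α i).factorial) * α.multinomial = α.degree.factorial := by
  rw [multinomial_eq_of_support_subset (subset_univ _), Nat.multinomial_spec, degree_eq_sum]

theorem prod_factorial_mul_multinomial_tsub {α β : σ →₀ ℕ} (h : α ≤ β) :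
    (∏ i, (β i).factorial) * (β - α).multinomial =
      (β - α).degree.factorial * ∏ i, (β i).descFactorial (α i) := by
  have hfac : ∀ i, (β i).factorial = ((β - α) i).factorial * (β i).descFactorial (α i) := fun i =>
    (Nat.factorial_mul_descFactorial (h i)).symm
  rw [Finset.prod_congr rfl fun i _ => hfac i, Finset.prod_mul_distrib, mul_right_comm,
    prod_factorial_mul_multinomial]

end Finsupp

namespace MvPolynomial

variable {σ R : Type*}

theorem IsHomogeneous.degree_eq_of_mem_support [CommSemiring R] {φ : MvPolynomial σ R} {d : ℕ}
    (hφ : φ.IsHomogeneous d) {α : σ →₀ ℕ} (hα : α ∈ φ.support) : α.degree = d :=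
  (hφ.degree_eq_sum_deg_support hα).symm

theorem IsHomogeneous.eval_smul [Fintype σ] [CommSemiring R] {φ : MvPolynomial σ R} {d : ℕ}
    (hφ : φ.IsHomogeneous d) (c : R) (x : σ → R) : eval (c • x) φ = c ^ d * eval x φ := by
  simp only [eval_eq', mul_sum]
  refine sum_congr rfl fun α hα => ?_
  simp only [Pi.smul_apply, smul_eq_mul, mul_pow, prod_mul_distrib, prod_pow_eq_pow_sum,
    ← Finsupp.degree_eq_sum, hφ.degree_eq_of_mem_support hα]
  ring

theorem IsHomogeneous.pow_sum_mul_le_eval [Fintype σ] {φ : MvPolynomial σ ℝ} {d : ℕ}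
    (hφ : φ.IsHomogeneous d) {m : ℝ} (hm : ∀ y ∈ stdSimplex ℝ σ, m ≤ eval y φ)
    (hne : (stdSimplex ℝ σ).Nonempty) {x : σ → ℝ} (hx : ∀ i, 0 ≤ x i) :
    (∑ i, x i) ^ d * m ≤ eval x φ := by
  set s := ∑ i, x i
  obtain ⟨y, hy⟩ : ∃ y ∈ stdSimplex ℝ σ, x = s • y := by
    rcases (sum_nonneg fun i _ => hx i).eq_or_lt with hs | hs
    · obtain ⟨y, hy⟩ := hne
      have hx0 : ∀ i, x i = 0 := fun i =>
        (sum_eq_zero_iff_of_nonneg fun i _ => hx i).1 hs.symm i (mem_univ i)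
      refine ⟨y, hy, _root_.funext fun i => ?_⟩
      simp [s, hx0]
    · refine ⟨s⁻¹ • x, ⟨fun i => mul_nonneg (inv_nonneg.2 hs.le) (hx i), ?_⟩, ?_⟩
      · simp [← mul_sum, inv_mul_cancel₀ hs.ne', s]
      · rw [smul_smul, mul_inv_cancel₀ hs.ne', one_smul]
  rw [hy.2, hφ.eval_smul]
  exact mul_le_mul_of_nonneg_left (hm y hy.1) (pow_nonneg (sum_nonneg fun i _ => hx i) d)

variable [Fintype σ]

/-- Evaluation of `φ` at the lattice point `β` in the falling-factorial basis: the monomial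
`X ^ α` is sent to `∏ i, β i (β i - 1) ⋯ (β i - α i + 1)`. -/
def evalDescFactorial [CommSemiring R] (β : σ →₀ ℕ) (φ : MvPolynomial σ R) : R :=
  ∑ α ∈ φ.support, coeff α φ * ∏ i, ((β i).descFactorial (α i) : R)

section CommSemiring

variable [CommSemiring R]

theorem prod_factorial_mul_coeff_sum_X_pow_mul_monomial {N : ℕ} {α β : σ →₀ ℕ}
    (h : α.degree + N = β.degree) (r : R) :
    (∏ i, ((β i).factorial : R)) * coeff β ((∑ i, X i) ^ N * monomial α r) =
      N.factorial * (r * ∏ i, ((β i).descFactorial (α i) : R)) := by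
  rw [coeff_mul_monomial']
  split_ifs with hαβ
  · have hdeg : (β - α).degree = N := by
      have := congrArg Finsupp.degree (tsub_add_cancel_of_le hαβ)
      rw [map_add] at this
      omega
    have hnat : (∏ i, ((β i).factorial : R)) * ((β - α).multinomial : R) =
        N.factorial * ∏ i, ((β i).descFactorial (α i) : R) := by
      exact_mod_cast congrArg (Nat.cast : ℕ → R)
        (hdeg ▸ Finsupp.prod_factorial_mul_multinomial_tsub hαβ)
    rw [coeff_sum_X_pow_of_fintype, Finsupp.sum_id_eq_degree, if_pos hdeg, ← mul_assoc, hnat]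
    ring
  · obtain ⟨i, hi⟩ : ∃ i, β i < α i := by
      simpa [Finsupp.le_def] using hαβ
    have hzero : ∏ i, ((β i).descFactorial (α i) : R) = 0 :=
      prod_eq_zero (mem_univ i) (by rw [Nat.descFactorial_eq_zero_iff_lt.2 hi, Nat.cast_zero])
    simp [hzero]

theorem IsHomogeneous.prod_factorial_mul_coeff_sum_X_pow_mul {φ : MvPolynomial σ R} {d N : ℕ}
    (hφ : φ.IsHomogeneous d) {β : σ →₀ ℕ} (hβ : β.degree = d + N) :
    (∏ i, ((β i).factorial : R)) * coeff β ((∑ i, X i) ^ N * φ) =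
      N.factorial * evalDescFactorial β φ := by
  conv_lhs => rw [φ.as_sum]
  rw [mul_sum, coeff_sum, mul_sum, evalDescFactorial, mul_sum]
  refine sum_congr rfl fun α hα => ?_
  exact prod_factorial_mul_coeff_sum_X_pow_mul_monomial
    (by rw [hφ.degree_eq_of_mem_support hα, hβ]) _

theorem isHomogeneous_sum_X_pow (d : ℕ) :
    ((∑ i, X i : MvPolynomial σ R) ^ d).IsHomogeneous d := by
  simpa using (IsHomogeneous.sum univ _ 1 fun i _ => isHomogeneous_X R i).pow d

end CommSemiring

-- The multinomial Vandermonde identity, read off from the coefficient formula for `(∑ X i) ^ d`.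
theorem evalDescFactorial_sum_X_pow [CommRing R] [IsDomain R] [CharZero R] {d : ℕ}
    {β : σ →₀ ℕ} (hβ : d ≤ β.degree) :
    evalDescFactorial β ((∑ i, X i : MvPolynomial σ R) ^ d) = β.degree.descFactorial d := by
  obtain ⟨N, hN⟩ := Nat.exists_eq_add_of_le hβ
  have key := (isHomogeneous_sum_X_pow (R := R) d).prod_factorial_mul_coeff_sum_X_pow_mul hN
  rw [← pow_add, coeff_sum_X_pow_of_fintype, Finsupp.sum_id_eq_degree,
    if_pos (by omega)] at key
  refine mul_left_cancel₀ (Nat.cast_ne_zero.2 N.factorial_ne_zero) (key.symm.trans ?_)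
  have hfac := Nat.factorial_mul_descFactorial hβ
  rw [hN, add_tsub_cancel_left] at hfac
  exact_mod_cast congrArg (Nat.cast : ℕ → R) (by
    rw [Finsupp.prod_factorial_mul_multinomial, hN, hfac])

theorem eval_sum_X_pow_natCast (β : σ →₀ ℕ) (d : ℕ) :
    eval (fun i => (β i : ℝ)) ((∑ i, X i) ^ d) = (β.degree : ℝ) ^ d := by
  simp [Finsupp.degree_eq_sum]

theorem IsHomogeneous.abs_eval_sub_evalDescFactorial_le {φ : MvPolynomial σ ℝ} {d : ℕ}
    (hφ : φ.IsHomogeneous d) {L : ℝ} (hL : 0 ≤ L)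
    (hcoeff : ∀ α ∈ φ.support, |coeff α φ| ≤ L * α.multinomial) {β : σ →₀ ℕ}
    (hβ : d ≤ β.degree) :
    |eval (fun i => (β i : ℝ)) φ - evalDescFactorial β φ| ≤
      L * ((β.degree : ℝ) ^ d - β.degree.descFactorial d) := by
  set ψ : MvPolynomial σ ℝ := (∑ i, X i) ^ d
  set w : (σ →₀ ℕ) → ℝ := fun α =>
    ∏ i, (β i : ℝ) ^ α i - ∏ i, ((β i).descFactorial (α i) : ℝ)
  have hw : ∀ α, 0 ≤ w α := fun α => sub_nonneg.2 <| prod_le_prod (fun _ _ => by positivity)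
    fun i _ => by exact_mod_cast Nat.descFactorial_le_pow (β i) (α i)
  have hψ : ∀ α ∈ φ.support, coeff α ψ = α.multinomial := fun α hα => by
    rw [coeff_sum_X_pow_of_fintype, Finsupp.sum_id_eq_degree,
      if_pos (hφ.degree_eq_of_mem_support hα)]
  have hsupp : φ.support ⊆ ψ.support := fun α hα => by
    rw [mem_support_iff, hψ α hα]
    exact_mod_cast (Nat.multinomial_pos _ _).ne'
  have hdiff : ∀ χ : MvPolynomial σ ℝ,
      eval (fun i => (β i : ℝ)) χ - evalDescFactorial β χ = ∑ α ∈ χ.support, coeff α χ * w α :=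
    fun χ => by simp only [eval_eq', evalDescFactorial, ← sum_sub_distrib, mul_sub, w]
  calc |eval (fun i => (β i : ℝ)) φ - evalDescFactorial β φ|
      ≤ ∑ α ∈ φ.support, |coeff α φ| * w α := by
        rw [hdiff]
        refine (abs_sum_le_sum_abs _ _).trans_eq (sum_congr rfl fun α _ => ?_)
        rw [abs_mul, abs_of_nonneg (hw α)]
    _ ≤ ∑ α ∈ φ.support, L * (coeff α ψ * w α) := sum_le_sum fun α hα => by
        rw [hψ α hα, ← mul_assoc]
        exact mul_le_mul_of_nonneg_right (hcoeff α hα) (hw α)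
    _ ≤ ∑ α ∈ ψ.support, L * (coeff α ψ * w α) := by
        refine sum_le_sum_of_subset_of_nonneg hsupp fun α hα _ => ?_
        have : 0 ≤ coeff α ψ := by
          rw [coeff_sum_X_pow_of_fintype]
          split_ifs <;> positivity
        have := hw α
        positivity
    _ = L * ((β.degree : ℝ) ^ d - β.degree.descFactorial d) := by
        rw [← mul_sum, ← hdiff, eval_sum_X_pow_natCast, evalDescFactorial_sum_X_pow hβ]

end MvPolynomial

theorem Nat.pow_succ_le_descFactorial_add (s d : ℕ) :
    s ^ (d + 1) ≤ s.descFactorial (d + 1) + (d + 1).choose 2 * s ^ d := by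
  induction d with
  | zero => simp
  | succ d ih =>
    have hdesc : s * s.descFactorial (d + 1) ≤
        s.descFactorial (d + 2) + (d + 1) * s.descFactorial (d + 1) := by
      rcases le_or_gt (d + 1) s with h | h
      · rw [Nat.descFactorial_succ s (d + 1), ← add_mul]
        exact Nat.mul_le_mul_right _ (by omega)
      · rw [Nat.descFactorial_eq_zero_iff_lt.2 h]
        simp
    have hpow := Nat.mul_le_mul_left (d + 1) (Nat.descFactorial_le_pow s (d + 1))
    have hchoose : (d + 2).choose 2 = (d + 1).choose 2 + (d + 1) := by
      simp [Nat.choose_succ_succ, add_comm]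
    calc s ^ (d + 2) = s * s ^ (d + 1) := by ring
      _ ≤ s * (s.descFactorial (d + 1) + (d + 1).choose 2 * s ^ d) := Nat.mul_le_mul_left s ih
      _ = s * s.descFactorial (d + 1) + (d + 1).choose 2 * s ^ (d + 1) := by ring
      _ ≤ s.descFactorial (d + 2) + (d + 2).choose 2 * s ^ (d + 1) := by
        rw [hchoose]; linarith

theorem mul_pow_sub_descFactorial_lt_pow_mul {d N : ℕ} {L m : ℝ} (hm : 0 < m) (hL : 0 ≤ L)
    (hN : d * (d - 1) * L / (2 * m) - d < N) :
    L * (((d + N : ℕ) : ℝ) ^ d - (d + N).descFactorial d) < ((d + N : ℕ) : ℝ) ^ d * m := by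
  rcases d with _ | e
  · simpa using hm
  have hgap : ((e + 1 + N : ℕ) : ℝ) ^ (e + 1) - (e + 1 + N).descFactorial (e + 1) ≤
      (e + 1).choose 2 * ((e + 1 + N : ℕ) : ℝ) ^ e := by
    rw [sub_le_iff_le_add']
    exact_mod_cast Nat.pow_succ_le_descFactorial_add (e + 1 + N) e
  have hthreshold : ((e + 1).choose 2 : ℝ) * L < ((e + 1 + N : ℕ) : ℝ) * m := by
    rw [sub_lt_iff_lt_add, div_lt_iff₀ (by positivity)] at hN
    rw [Nat.cast_choose_two]
    push_cast at hN ⊢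
    linarith
  set S : ℝ := ((e + 1 + N : ℕ) : ℝ)
  calc L * (S ^ (e + 1) - (e + 1 + N).descFactorial (e + 1))
      ≤ L * ((e + 1).choose 2 * S ^ e) := mul_le_mul_of_nonneg_left hgap hL
    _ = ((e + 1).choose 2 * L) * S ^ e := by ring
    _ < (S * m) * S ^ e := mul_lt_mul_of_pos_right hthreshold (by positivity)
    _ = S ^ (e + 1) * m := by ring

theorem wnorm_nonneg {n : ℕ} (f : MvPolynomial (Fin n) ℝ) : 0 ≤ wnorm f := NNReal.coe_nonneg _

theorem abs_coeff_le_wnorm_mul_multinomial {n : ℕ} (f : MvPolynomial (Fin n) ℝ) {α : Fin n →₀ ℕ}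
    (hα : α ∈ f.support) : |coeff α f| ≤ wnorm f * α.multinomial := by
  have hle : ‖coeff α f‖₊ * (∏ i, ((α i).factorial : NNReal)) /
      ((α.sum fun _ e => e).factorial : NNReal) ≤ _ := le_sup (f := fun α : Fin n →₀ ℕ =>
    ‖coeff α f‖₊ * (∏ i, ((α i).factorial : NNReal)) /
      (((α.sum fun _ e => e).factorial : NNReal))) hα
  have hspec : ((α.sum fun _ e => e).factorial : ℝ) =
      (∏ i, ((α i).factorial : ℝ)) * α.multinomial := by
    exact_mod_cast (Finsupp.prod_factorial_mul_multinomial α).symm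
  have h := NNReal.coe_le_coe.2 hle
  push_cast at h
  rw [← wnorm, div_le_iff₀ (by positivity), hspec, ← mul_assoc, mul_comm (wnorm f)] at h
  rw [← Real.norm_eq_abs]
  exact le_of_mul_le_mul_right (h.trans_eq (by ring)) (by positivity)

theorem stmt14_general (n d : ℕ) (f : MvPolynomial (Fin n) ℝ) (hf : f.IsHomogeneous d)
    (fstar : ℝ)
    (hfstar : IsLeast
      {r : ℝ | ∃ y : Fin n → ℝ, (∀ i, 0 ≤ y i) ∧ (∑ i, y i) = 1 ∧ eval y f = r} fstar)
    (hfpos : 0 < fstar)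
    (N : ℕ) (hN : (d : ℝ) * ((d : ℝ) - 1) * wnorm f / (2 * fstar) - (d : ℝ) < (N : ℝ)) :
    ∀ α : Fin n →₀ ℕ, (α.sum fun _ e => e) = d + N →
      0 < coeff α ((∑ i, X i) ^ N * f) := by
  intro β hβ
  rw [Finsupp.sum_id_eq_degree] at hβ
  have hmin : ((d + N : ℕ) : ℝ) ^ d * fstar ≤ eval (fun i => (β i : ℝ)) f := by
    obtain ⟨y, hy₀, hy₁, -⟩ := hfstar.1
    have := hf.pow_sum_mul_le_eval (fun y hy => hfstar.2 ⟨y, hy.1, hy.2, rfl⟩) ⟨y, hy₀, hy₁⟩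
      (x := fun i => (β i : ℝ)) fun i => Nat.cast_nonneg _
    rwa [← Nat.cast_sum, ← Finsupp.degree_eq_sum, hβ] at this
  have hgap := hf.abs_eval_sub_evalDescFactorial_le (wnorm_nonneg f)
    (fun α hα => abs_coeff_le_wnorm_mul_multinomial f hα) (hβ ▸ Nat.le_add_right d N)
  rw [hβ] at hgap
  have hdesc : 0 < evalDescFactorial β f := by
    linarith [mul_pow_sub_descFactorial_lt_pow_mul hfpos (wnorm_nonneg f) hN,
      le_abs_self (eval (fun i => (β i : ℝ)) f - evalDescFactorial β f)]
  have hcoeff := hf.prod_factorial_mul_coeff_sum_X_pow_mul (R := ℝ) hβ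
  refine pos_of_mul_pos_right ?_ (by positivity : (0 : ℝ) ≤ ∏ i, ((β i).factorial : ℝ))
  rw [hcoeff]
  positivity

theorem stmt14 (n d : ℕ) (f : MvPolynomial (Fin n) ℝ) (hf : f.IsHomogeneous d)
    (hpos : ∀ y : Fin n → ℝ, (∀ i, 0 ≤ y i) → (∑ i, y i) = 1 → 0 < eval y f)
    (fstar : ℝ)
    (hfstar : IsLeast
      {r : ℝ | ∃ y : Fin n → ℝ, (∀ i, 0 ≤ y i) ∧ (∑ i, y i) = 1 ∧ eval y f = r} fstar)
    (hfpos : 0 < fstar)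
    (N : ℕ) (hN : (d : ℝ) * ((d : ℝ) - 1) * wnorm f / (2 * fstar) - (d : ℝ) < (N : ℝ)) :
    ∀ α : Fin n →₀ ℕ, (α.sum fun _ e => e) = d + N →
      0 < coeff α ((∑ i, X i) ^ N * f) :=
  stmt14_general n d f hf fstar hfstar hfpos N hN
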